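/- arXiv:1609.01008 — 3 statements merged into one kernel-verified Lean document; each statement's English description precedes it below -/
import Mathlib

section
/- The Ricci curvature of the connection D^{α,γ} satisfies Ric^D = Ric − [(n−1)α + γ] ∇²u + [(n−1)α² − γ²] du⊗du + (γ Δu + γ[(n−1)α + γ] |∇u|²) g, where Ric, ∇²u, Δu are taken with respect to the Levi-Civita connection of g. -/
open scoped Manifold
open Finset Function MeasureTheory

variable {EE : Type*} [NormedAddCommGroup EE] [NormedSpace ℝ EE]
  {HM : Type*} [TopologicalSpace HM] {I : ModelWithCorners ℝ EE HM}
  {M : Type*} [TopologicalSpace M] [ChartedSpace HM M] [IsManifold I ((⊤ : ℕ∞) : WithTop ℕ∞) M]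

local notation "𝒞" => C^(⊤ : ℕ∞)⟮I, M; ℝ⟯
local notation "VF" => Derivation ℝ C^(⊤ : ℕ∞)⟮I, M; ℝ⟯ C^(⊤ : ℕ∞)⟮I, M; ℝ⟯

/-- `D` is an affine connection on vector fields: additive and `𝒞`-linear in the
first slot, additive, `ℝ`-linear and Leibniz in the second slot. -/
def IsAffineConnection (D : VF → VF → VF) : Prop :=
  (∀ X Y Z, D (X + Y) Z = D X Z + D Y Z) ∧
  (∀ (f : 𝒞) X Y, D (f • X) Y = f • D X Y) ∧
  (∀ X Y Z, D X (Y + Z) = D X Y + D X Z) ∧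
  (∀ (c : ℝ) X Y, D X (c • Y) = c • D X Y) ∧
  (∀ (f : 𝒞) X Y, D X (f • Y) = X f • Y + f • D X Y)

/-- `g` is a (symmetric, `𝒞`-bilinear) Riemannian metric pairing on vector fields. -/
def IsMetric (g : VF → VF → 𝒞) : Prop :=
  (∀ X Y, g X Y = g Y X) ∧
  (∀ X Y Z, g (X + Y) Z = g X Z + g Y Z) ∧
  (∀ (f : 𝒞) X Y, g (f • X) Y = f * g X Y)

/-- `e` is a global orthonormal frame for `g`. -/
def IsONFrame {n : ℕ} (g : VF → VF → 𝒞) (e : Fin n → VF) : Prop :=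
  (∀ i j, g (e i) (e j) = if i = j then 1 else 0) ∧
  (∀ X : VF, X = ∑ i, g X (e i) • e i)

/-- `D` is torsion-free. -/
def IsTorsionFree (D : VF → VF → VF) : Prop := ∀ X Y, D X Y - D Y X = ⁅X, Y⁆

/-- `D` is compatible with the metric `g`. -/
def IsCompatible (g : VF → VF → 𝒞) (D : VF → VF → VF) : Prop :=
  ∀ X Y Z, X (g Y Z) = g (D X Y) Z + g Y (D X Z)

/-- Curvature operator `R^D(X,Y)Z = D_X D_Y Z - D_Y D_X Z - D_{[X,Y]} Z`. -/
noncomputable def Rcurv (D : VF → VF → VF) (X Y Z : VF) : VF := D X (D Y Z) - D Y (D X Z) - D ⁅X, Y⁆ Z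

/-- Ricci tensor of `D`: the trace of `Z ↦ R^D(Z,X)Y`, computed via the orthonormal frame. -/
noncomputable def RicciT {n : ℕ} (g : VF → VF → 𝒞) (e : Fin n → VF) (D : VF → VF → VF) (X Y : VF) : 𝒞 :=
  ∑ i, g (Rcurv D (e i) X Y) (e i)

/-- Hessian of a function with respect to a connection. -/
noncomputable def HessT (D : VF → VF → VF) (u : 𝒞) (X Y : VF) : 𝒞 := X (Y u) - (D X Y) u

/-- Laplacian of a function with respect to a connection (frame trace of the Hessian). -/
noncomputable def LapT {n : ℕ} (D : VF → VF → VF) (e : Fin n → VF) (u : 𝒞) : 𝒞 :=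
  ∑ i, HessT D u (e i) (e i)

/-- Divergence of a vector field with respect to a connection (frame trace of `DY`). -/
noncomputable def divT {n : ℕ} (g : VF → VF → 𝒞) (e : Fin n → VF) (D : VF → VF → VF) (Y : VF) : 𝒞 :=
  ∑ i, g (D (e i) Y) (e i)

/-- Second covariant derivative `D²X(V,W) = D_W (D_V X) - D_{D_W V} X`. -/
noncomputable def D2T (D : VF → VF → VF) (X V W : VF) : VF := D W (D V X) - D (D W V) X

/-!
Write `D = ∇ + S` with `S(X, Y) = α du(X) Y + α du(Y) X + γ g(X, Y) ∇u`. Since `∇` is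
torsion-free, `R^D(Z,X)Y = R(Z,X)Y + (∇_Z S)(X,Y) - (∇_X S)(Z,Y) + S(Z, S(X,Y)) - S(X, S(Z,Y))`,
and since `∇` is metric, `(∇_Z S)(X,Y) = α ∇²u(Z,X) Y + α ∇²u(Z,Y) X + γ g(X,Y) ∇_Z ∇u`.
Each of the four correction terms is then traced over the orthonormal frame using
`∑ᵢ g(V, eᵢ) F(eᵢ) = F(V)` for `F` linear over functions, together with the symmetry of `∇²u`.
-/

theorem IsMetric.add_right {g : VF → VF → 𝒞} (hg : IsMetric g) (X Y Z : VF) :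
    g X (Y + Z) = g X Y + g X Z := by
  rw [hg.1, hg.2.1, hg.1 Y, hg.1 Z]

theorem IsMetric.sub_left {g : VF → VF → 𝒞} (hg : IsMetric g) (X Y Z : VF) :
    g (X - Y) Z = g X Z - g Y Z :=
  (AddMonoidHom.mk' (g · Z) fun X Y => hg.2.1 X Y Z).map_sub X Y

theorem IsONFrame.sum_mul_apply {n : ℕ} {g : VF → VF → 𝒞} {e : Fin n → VF} (he : IsONFrame g e)
    (F : VF → 𝒞) (hF_add : ∀ X Y, F (X + Y) = F X + F Y)
    (hF_smul : ∀ (f : 𝒞) X, F (f • X) = f * F X) (V : VF) :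
    ∑ i, g V (e i) * F (e i) = F V := by
  have hF_sum := map_sum (AddMonoidHom.mk' F hF_add) (fun i => g V (e i) • e i) univ
  simp only [AddMonoidHom.mk'_apply, hF_smul, ← he.2 V] at hF_sum
  exact hF_sum.symm

theorem IsONFrame.sum_self {n : ℕ} {g : VF → VF → 𝒞} {e : Fin n → VF} (he : IsONFrame g e) :
    ∑ i, g (e i) (e i) = n := by
  simp [he.1]

theorem IsONFrame.sum_mul_metric {n : ℕ} {g : VF → VF → 𝒞} {e : Fin n → VF} (hg : IsMetric g)
    (he : IsONFrame g e) (V W : VF) : ∑ i, g V (e i) * g (e i) W = g V W :=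
  he.sum_mul_apply (g · W) (fun X Y => hg.2.1 X Y W) (fun f X => hg.2.2 f X W) V

noncomputable def tensorCovDeriv (LC S : VF → VF → VF) (Z X Y : VF) : VF :=
  LC Z (S X Y) - S (LC Z X) Y - S X (LC Z Y)

theorem rcurv_eq_add_tensorCovDeriv {LC S D : VF → VF → VF} (hLC : IsAffineConnection LC)
    (hLCtf : IsTorsionFree LC) (hS₁ : ∀ X Y Z, S (X + Y) Z = S X Z + S Y Z)
    (hS₂ : ∀ X Y Z, S X (Y + Z) = S X Y + S X Z) (hD : ∀ X Y, D X Y = LC X Y + S X Y)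
    (Z X Y : VF) :
    Rcurv D Z X Y = Rcurv LC Z X Y + tensorCovDeriv LC S Z X Y - tensorCovDeriv LC S X Z Y
      + S Z (S X Y) - S X (S Z Y) := by
  have hS_sub : ∀ A B, S (A - B) Y = S A Y - S B Y :=
    (AddMonoidHom.mk' (S · Y) fun A B => hS₁ A B Y).map_sub
  simp only [Rcurv, tensorCovDeriv, hD, hLC.2.2.1, hS₂, ← hLCtf Z X, hS_sub]
  abel

theorem ricciT_eq_add_tensorCovDeriv {n : ℕ} {g : VF → VF → 𝒞} (hg : IsMetric g)
    (e : Fin n → VF) {LC S D : VF → VF → VF} (hLC : IsAffineConnection LC)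
    (hLCtf : IsTorsionFree LC) (hS₁ : ∀ X Y Z, S (X + Y) Z = S X Z + S Y Z)
    (hS₂ : ∀ X Y Z, S X (Y + Z) = S X Y + S X Z) (hD : ∀ X Y, D X Y = LC X Y + S X Y)
    (X Y : VF) :
    RicciT g e D X Y = RicciT g e LC X Y + ∑ i, g (tensorCovDeriv LC S (e i) X Y) (e i)
      - ∑ i, g (tensorCovDeriv LC S X (e i) Y) (e i) + ∑ i, g (S (e i) (S X Y)) (e i)
      - ∑ i, g (S X (S (e i) Y)) (e i) := by
  simp only [RicciT, rcurv_eq_add_tensorCovDeriv hLC hLCtf hS₁ hS₂ hD, hg.sub_left, hg.2.1,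
    sum_add_distrib, sum_sub_distrib]

theorem hessT_symm {LC : VF → VF → VF} (hLCtf : IsTorsionFree LC) (u : 𝒞) (X Y : VF) :
    HessT LC u X Y = HessT LC u Y X := by
  have h := congrArg (fun V : VF => V u) (hLCtf X Y)
  simp only [Derivation.sub_apply, Derivation.commutator_apply] at h
  simp only [HessT]
  linear_combination -h

theorem hessT_add_left {LC : VF → VF → VF} (hLC : IsAffineConnection LC) (u : 𝒞) (X Y Z : VF) :
    HessT LC u (X + Y) Z = HessT LC u X Z + HessT LC u Y Z := by
  simp only [HessT, hLC.1, Derivation.add_apply]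
  ring

theorem hessT_smul_left {LC : VF → VF → VF} (hLC : IsAffineConnection LC) (u f : 𝒞) (X Y : VF) :
    HessT LC u (f • X) Y = f * HessT LC u X Y := by
  simp only [HessT, hLC.2.1, Derivation.smul_apply, smul_eq_mul]
  ring

theorem IsONFrame.sum_mul_hessT {n : ℕ} {g : VF → VF → 𝒞} {e : Fin n → VF} (he : IsONFrame g e)
    {LC : VF → VF → VF} (hLC : IsAffineConnection LC) (u : 𝒞) (V W : VF) :
    ∑ i, g V (e i) * HessT LC u (e i) W = HessT LC u V W :=
  he.sum_mul_apply (HessT LC u · W) (fun X Y => hessT_add_left hLC u X Y W)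
    (fun f X => hessT_smul_left hLC u f X W) V

theorem IsCompatible.metric_covDeriv_grad {g : VF → VF → 𝒞} {LC : VF → VF → VF}
    (hLCcompat : IsCompatible g LC) {u : 𝒞} {gradu : VF} (hgradu : ∀ X : VF, g gradu X = X u)
    (Z W : VF) : g (LC Z gradu) W = HessT LC u Z W := by
  rw [HessT, ← hgradu, ← hgradu, hLCcompat]
  ring

noncomputable def diffTensor (g : VF → VF → 𝒞) (u : 𝒞) (gradu : VF) (α γ : ℝ) (X Y : VF) : VF :=
  (α • X u) • Y + (α • Y u) • X + (γ • g X Y) • gradu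

theorem diffTensor_add_left {g : VF → VF → 𝒞} {u : 𝒞} {gradu : VF} {α γ : ℝ}
    (hg : IsMetric g) (X Y Z : VF) :
    diffTensor g u gradu α γ (X + Y) Z
      = diffTensor g u gradu α γ X Z + diffTensor g u gradu α γ Y Z := by
  simp only [diffTensor, hg.2.1, Derivation.add_apply, smul_add, add_smul]
  abel

theorem diffTensor_add_right {g : VF → VF → 𝒞} {u : 𝒞} {gradu : VF} {α γ : ℝ}
    (hg : IsMetric g) (X Y Z : VF) :
    diffTensor g u gradu α γ X (Y + Z)
      = diffTensor g u gradu α γ X Y + diffTensor g u gradu α γ X Z := by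
  simp only [diffTensor, hg.add_right, Derivation.add_apply, smul_add, add_smul]
  abel

theorem diffTensor_smul_left {g : VF → VF → 𝒞} {u : 𝒞} {gradu : VF} {α γ : ℝ}
    (hg : IsMetric g) (f : 𝒞) (X Y : VF) :
    diffTensor g u gradu α γ (f • X) Y = f • diffTensor g u gradu α γ X Y := by
  simp only [diffTensor, hg.2.2, Derivation.smul_apply, Algebra.smul_def]
  module

theorem metric_diffTensor {g : VF → VF → 𝒞} {u : 𝒞} {gradu : VF} {α γ : ℝ}
    (hg : IsMetric g) (hgradu : ∀ X : VF, g gradu X = X u) (X Y W : VF) :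
    g (diffTensor g u gradu α γ X Y) W
      = α • X u * g Y W + α • Y u * g X W + γ • g X Y * W u := by
  simp only [diffTensor, hg.2.1, hg.2.2, hgradu]

theorem diffTensor_apply {g : VF → VF → 𝒞} (hg : IsMetric g) {u : 𝒞} {gradu : VF}
    (hgradu : ∀ X : VF, g gradu X = X u) (α γ : ℝ) (X Y : VF) :
    diffTensor g u gradu α γ X Y u = (2 * α) • (X u * Y u) + γ • (g X Y * g gradu gradu) := by
  have hgradu' : ∀ X : VF, g X gradu = X u := fun X => (hg.1 _ _).trans (hgradu X)
  rw [← hgradu', metric_diffTensor hg hgradu]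
  simp only [hgradu', Algebra.smul_def, map_mul, map_ofNat]
  ring

theorem tensorCovDeriv_diffTensor {g : VF → VF → 𝒞} {LC : VF → VF → VF} {u : 𝒞} {gradu : VF}
    {α γ : ℝ} (hLC : IsAffineConnection LC) (hLCcompat : IsCompatible g LC) (Z X Y : VF) :
    tensorCovDeriv LC (diffTensor g u gradu α γ) Z X Y
      = (α • HessT LC u Z X) • Y + (α • HessT LC u Z Y) • X + (γ • g X Y) • LC Z gradu := by
  simp only [tensorCovDeriv, diffTensor, hLC.2.2.1, hLC.2.2.2.2, Derivation.map_smul,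
    hLCcompat Z X Y, HessT]
  simp only [Algebra.smul_def]
  module

theorem metric_tensorCovDeriv_diffTensor {g : VF → VF → 𝒞} (hg : IsMetric g)
    {LC : VF → VF → VF} (hLC : IsAffineConnection LC) (hLCcompat : IsCompatible g LC) {u : 𝒞}
    {gradu : VF} (hgradu : ∀ X : VF, g gradu X = X u) (α γ : ℝ) (Z X Y W : VF) :
    g (tensorCovDeriv LC (diffTensor g u gradu α γ) Z X Y) W
      = α • HessT LC u Z X * g Y W + α • HessT LC u Z Y * g X W
        + γ • g X Y * HessT LC u Z W := by
  rw [tensorCovDeriv_diffTensor hLC hLCcompat]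
  simp only [hg.2.1, hg.2.2, hLCcompat.metric_covDeriv_grad hgradu]

theorem sum_metric_diffTensor_frame {n : ℕ} {g : VF → VF → 𝒞} (hg : IsMetric g) {e : Fin n → VF}
    (he : IsONFrame g e) {u : 𝒞} {gradu : VF} (hgradu : ∀ X : VF, g gradu X = X u) (α γ : ℝ)
    (V : VF) :
    ∑ i, g (diffTensor g u gradu α γ (e i) V) (e i) = (((n : ℝ) + 1) * α + γ) • V u := by
  have hpt : ∀ Z, g (diffTensor g u gradu α γ Z V) Z
      = (α + γ) • (g gradu Z * g Z V) + (α • V u) * g Z Z := by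
    intro Z
    rw [metric_diffTensor hg hgradu, ← hgradu Z, hg.1 V Z]
    simp only [Algebra.smul_def, map_add]
    ring
  simp only [hpt, sum_add_distrib, ← smul_sum, ← mul_sum]
  rw [he.sum_mul_metric hg, he.sum_self, hgradu]
  simp only [Algebra.smul_def, map_add, map_mul, map_natCast, map_one]
  ring

theorem sum_metric_diffTensor_diffTensor_frame {n : ℕ} {g : VF → VF → 𝒞} (hg : IsMetric g)
    {e : Fin n → VF} (he : IsONFrame g e) {u : 𝒞} {gradu : VF}
    (hgradu : ∀ X : VF, g gradu X = X u) (α γ : ℝ) (X Y : VF) :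
    ∑ i, g (diffTensor g u gradu α γ X (diffTensor g u gradu α γ (e i) Y)) (e i)
      = (((n : ℝ) + 3) * α ^ 2 + 2 * α * γ + γ ^ 2) • (X u * Y u)
        + (2 * α * γ) • (g X Y * g gradu gradu) := by
  set S := diffTensor g u gradu α γ
  have hsum : ∀ V W, ∑ i, g V (e i) * g (S (e i) Y) W = g (S V Y) W := fun V W =>
    he.sum_mul_apply (fun Z => g (S Z Y) W)
      (fun Z₁ Z₂ => by simp only [S, diffTensor_add_left hg, hg.2.1])
      (fun f Z => by simp only [S, diffTensor_smul_left hg, hg.2.2]) V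
  have hpt : ∀ Z, g (S X (S Z Y)) Z = α • X u * g (S Z Y) Z + α • (g X Z * g (S Z Y) gradu)
      + γ • (g gradu Z * g (S Z Y) X) := by
    intro Z
    rw [metric_diffTensor hg hgradu, ← hgradu (S Z Y), ← hgradu Z, hg.1 gradu (S Z Y),
      hg.1 X (S Z Y)]
    simp only [Algebra.smul_def]
    ring
  simp only [hpt, sum_add_distrib, ← smul_sum, ← mul_sum]
  rw [hsum, hsum, sum_metric_diffTensor_frame hg he hgradu, hg.1 (S X Y), hgradu,
    diffTensor_apply hg hgradu, metric_diffTensor hg hgradu, hg.1 Y X]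
  simp only [hgradu, Algebra.smul_def, map_add, map_mul, map_pow, map_natCast, map_ofNat, map_one]
  ring

theorem sum_metric_tensorCovDeriv_diffTensor_frame_left {n : ℕ} {g : VF → VF → 𝒞}
    (hg : IsMetric g) {e : Fin n → VF} (he : IsONFrame g e) {LC : VF → VF → VF}
    (hLC : IsAffineConnection LC) (hLCtf : IsTorsionFree LC) (hLCcompat : IsCompatible g LC)
    {u : 𝒞} {gradu : VF} (hgradu : ∀ X : VF, g gradu X = X u) (α γ : ℝ) (X Y : VF) :
    ∑ i, g (tensorCovDeriv LC (diffTensor g u gradu α γ) (e i) X Y) (e i)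
      = (2 * α) • HessT LC u X Y + γ • (g X Y * LapT LC e u) := by
  have hpt : ∀ Z, g (tensorCovDeriv LC (diffTensor g u gradu α γ) Z X Y) Z
      = α • (g Y Z * HessT LC u Z X) + α • (g X Z * HessT LC u Z Y)
        + γ • g X Y * HessT LC u Z Z := by
    intro Z
    rw [metric_tensorCovDeriv_diffTensor hg hLC hLCcompat hgradu]
    simp only [Algebra.smul_def]
    ring
  simp only [hpt, sum_add_distrib, ← smul_sum, ← mul_sum, he.sum_mul_hessT hLC, LapT,
    hessT_symm hLCtf u Y X]
  simp only [Algebra.smul_def, map_mul, map_ofNat]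
  ring

theorem sum_metric_tensorCovDeriv_diffTensor_frame_right {n : ℕ} {g : VF → VF → 𝒞}
    (hg : IsMetric g) {e : Fin n → VF} (he : IsONFrame g e) {LC : VF → VF → VF}
    (hLC : IsAffineConnection LC) (hLCtf : IsTorsionFree LC) (hLCcompat : IsCompatible g LC)
    {u : 𝒞} {gradu : VF} (hgradu : ∀ X : VF, g gradu X = X u) (α γ : ℝ) (X Y : VF) :
    ∑ i, g (tensorCovDeriv LC (diffTensor g u gradu α γ) X (e i) Y) (e i)
      = (((n : ℝ) + 1) * α + γ) • HessT LC u X Y := by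
  have hpt : ∀ Z, g (tensorCovDeriv LC (diffTensor g u gradu α γ) X Z Y) Z
      = (α + γ) • (g Y Z * HessT LC u Z X) + α • HessT LC u X Y * g Z Z := by
    intro Z
    rw [metric_tensorCovDeriv_diffTensor hg hLC hLCcompat hgradu, hessT_symm hLCtf u X Z,
      hg.1 Z Y]
    simp only [Algebra.smul_def, map_add]
    ring
  simp only [hpt, sum_add_distrib, ← smul_sum, ← mul_sum]
  rw [he.sum_mul_hessT hLC, he.sum_self, hessT_symm hLCtf u Y X]
  simp only [Algebra.smul_def, map_add, map_mul, map_natCast, map_one]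
  ring

/-- formula for the Ricci curvature of `D^{α,γ}` (Proposition 2.3). -/
theorem ricci_of_affine_connection {n : ℕ}
    (g : VF → VF → 𝒞) (hg : IsMetric g)
    (e : Fin n → VF) (he : IsONFrame g e)
    (LC : VF → VF → VF) (hLC : IsAffineConnection LC) (hLCtf : IsTorsionFree LC)
    (hLCcompat : IsCompatible g LC)
    (u : 𝒞) (gradu : VF) (hgradu : ∀ X : VF, g gradu X = X u)
    (α γ : ℝ) (D : VF → VF → VF)
    (hD : ∀ X Y, D X Y = LC X Y + (α • X u) • Y + (α • Y u) • X + (γ • g X Y) • gradu) :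
    ∀ X Y : VF,
      RicciT g e D X Y
        = RicciT g e LC X Y
          - (((n : ℝ) - 1) * α + γ) • HessT LC u X Y
          + ((((n : ℝ) - 1) * α ^ 2 - γ ^ 2) • (X u * Y u))
          + (γ • LapT LC e u
              + (γ * (((n : ℝ) - 1) * α + γ)) • g gradu gradu) * g X Y := by
  intro X Y
  have hDS : ∀ X Y, D X Y = LC X Y + diffTensor g u gradu α γ X Y := fun X Y => by
    rw [hD, diffTensor]
    abel
  rw [ricciT_eq_add_tensorCovDeriv hg e hLC hLCtf (diffTensor_add_left hg)
      (diffTensor_add_right hg) hDS,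
    sum_metric_tensorCovDeriv_diffTensor_frame_left hg he hLC hLCtf hLCcompat hgradu,
    sum_metric_tensorCovDeriv_diffTensor_frame_right hg he hLC hLCtf hLCcompat hgradu,
    sum_metric_diffTensor_frame hg he hgradu, diffTensor_apply hg hgradu,
    sum_metric_diffTensor_diffTensor_frame hg he hgradu]
  simp only [Algebra.smul_def, map_add, map_sub, map_mul, map_pow, map_natCast, map_ofNat,
    map_one]
  ring
end

section
/- For α = 0, γ = 1 and V = e^u, the Ricci tensor of D^{0,1} equals the static Ricci tensor: Ric^{D^{0,1}} = Ric − (∇²V)/V + (ΔV/V) g. -/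
/-!
Write `D = ∇ + g ⊗ G` with `G = ∇u`. Expanding `R^D` with the Leibniz rule, compatibility and
torsion-freeness of `∇` leaves `R^∇` plus terms linear in `G` and `∇G`; tracing them gives
`Ric^D = Ric + (|∇u|² + Δu) g - du ⊗ du - ∇²u`. For `V = e^u` one has
`∇²V / V = ∇²u + du ⊗ du` and `ΔV / V = Δu + |∇u|²`, which is the same correction.
-/

open scoped Manifold
open Finset Function MeasureTheory

variable {EE : Type*} [NormedAddCommGroup EE] [NormedSpace ℝ EE]
  {HM : Type*} [TopologicalSpace HM] {I : ModelWithCorners ℝ EE HM}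
  {M : Type*} [TopologicalSpace M] [ChartedSpace HM M] [IsManifold I (⊤ : ℕ∞) M]

local notation "𝒞" => C^(⊤ : ℕ∞)⟮I, M; ℝ⟯
local notation "VF" => Derivation ℝ C^(⊤ : ℕ∞)⟮I, M; ℝ⟯ C^(⊤ : ℕ∞)⟮I, M; ℝ⟯

namespace IsMetric

theorem add_right_s4 {g : VF → VF → 𝒞} (hg : IsMetric g) (X Y Z : VF) :
    g X (Y + Z) = g X Y + g X Z := by
  rw [hg.1, hg.2.1, hg.1 Y, hg.1 Z]

theorem smul_right {g : VF → VF → 𝒞} (hg : IsMetric g) (f : 𝒞) (X Y : VF) :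
    g X (f • Y) = f * g X Y := by
  rw [hg.1, hg.2.2, hg.1 Y]

theorem sub_left_s4 {g : VF → VF → 𝒞} (hg : IsMetric g) (X Y Z : VF) :
    g (X - Y) Z = g X Z - g Y Z :=
  eq_sub_of_add_eq (by rw [← hg.2.1, sub_add_cancel])

theorem sum_right {g : VF → VF → 𝒞} (hg : IsMetric g) {ι : Type*} (s : Finset ι) (X : VF)
    (Y : ι → VF) :
    g X (∑ i ∈ s, Y i) = ∑ i ∈ s, g X (Y i) :=
  map_sum (AddMonoidHom.mk' (g X) (hg.add_right_s4 X)) Y s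

end IsMetric

theorem IsONFrame.sum_mul_eq {n : ℕ} {g : VF → VF → 𝒞} {e : Fin n → VF} (hg : IsMetric g)
    (he : IsONFrame g e) (X Y : VF) : ∑ i, g X (e i) * g Y (e i) = g X Y := by
  conv_rhs => rw [he.2 Y, hg.sum_right]
  exact sum_congr rfl fun i _ => by rw [hg.smul_right, mul_comm]

theorem rcurv_of_eq_add_metric_smul {g : VF → VF → 𝒞} {LC D : VF → VF → VF} {G : VF}
    (hg : IsMetric g) (hLC : IsAffineConnection LC) (hLCtf : IsTorsionFree LC)
    (hLCcompat : IsCompatible g LC) (hD : ∀ X Y, D X Y = LC X Y + g X Y • G) (Z X Y : VF) :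
    Rcurv D Z X Y = Rcurv LC Z X Y + (g X Y * g Z G - g Z Y * g X G) • G
      + g X Y • LC Z G - g Z Y • LC X G := by
  have hDD : ∀ P Q R : VF, D P (D Q R) = LC P (LC Q R)
      + (P (g Q R) + g P (LC Q R) + g Q R * g P G) • G + g Q R • LC P G := by
    intro P Q R
    rw [hD Q, hD, hLC.2.2.1, hLC.2.2.2.2, hg.add_right_s4, hg.smul_right]
    module
  -- the derivatives of `g` in the `G`-component of `R^D(Z,X)Y` cancel
  have hG_coeff : Z (g X Y) + g Z (LC X Y) - X (g Z Y) - g X (LC Z Y) - g ⁅Z, X⁆ Y = 0 := by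
    rw [hLCcompat Z X Y, hLCcompat X Z Y, ← hLCtf Z X, hg.sub_left_s4]
    ring
  rw [Rcurv, Rcurv, hDD, hDD, hD ⁅Z, X⁆]
  match_scalars <;> first
    | ring1
    | linear_combination hG_coeff

theorem ricciT_of_eq_add_metric_smul {n : ℕ} {g : VF → VF → 𝒞} {e : Fin n → VF}
    {LC D : VF → VF → VF} {G : VF} (hg : IsMetric g) (he : IsONFrame g e)
    (hLC : IsAffineConnection LC) (hLCtf : IsTorsionFree LC) (hLCcompat : IsCompatible g LC)
    (hD : ∀ X Y, D X Y = LC X Y + g X Y • G) (X Y : VF) :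
    RicciT g e D X Y = RicciT g e LC X Y + g X Y * g G G - g X G * g Y G
      + g X Y * divT g e LC G - g (LC X G) Y := by
  have hterm : ∀ i, g (Rcurv D (e i) X Y) (e i) = g (Rcurv LC (e i) X Y) (e i)
      + g X Y * (g G (e i) * g G (e i)) - g X G * (g Y (e i) * g G (e i))
      + g X Y * g (LC (e i) G) (e i) - g (LC X G) (e i) * g Y (e i) := by
    intro i
    rw [rcurv_of_eq_add_metric_smul hg hLC hLCtf hLCcompat hD, hg.sub_left_s4, hg.2.1, hg.2.1,
      hg.2.2, hg.2.2, hg.2.2, hg.1 (e i) G, hg.1 (e i) Y]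
    ring
  simp only [RicciT, divT, hterm, sum_add_distrib, sum_sub_distrib, ← mul_sum,
    he.sum_mul_eq hg]

theorem IsCompatible.metric_covDeriv_grad_eq_hessT {g : VF → VF → 𝒞} {D : VF → VF → VF}
    {u : 𝒞} {G : VF} (hD : IsCompatible g D) (hG : ∀ X, g G X = X u) (X Y : VF) :
    g (D X G) Y = HessT D u X Y := by
  have h := hD X G Y
  rw [hG, hG] at h
  rw [HessT, h, add_sub_cancel_right]

theorem divT_eq_lapT_of_grad {n : ℕ} {g : VF → VF → 𝒞} {e : Fin n → VF}
    {D : VF → VF → VF} {u : 𝒞} {G : VF} (hD : IsCompatible g D)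
    (hG : ∀ X, g G X = X u) : divT g e D G = LapT D e u :=
  sum_congr rfl fun i _ => hD.metric_covDeriv_grad_eq_hessT hG (e i) (e i)

theorem hessT_of_apply_eq_mul_apply {D : VF → VF → VF} {u V : 𝒞}
    (hV : ∀ X : VF, X V = V * X u) (X Y : VF) :
    HessT D V X Y = V * (HessT D u X Y + X u * Y u) := by
  rw [HessT, HessT, hV, hV, Derivation.leibniz, smul_eq_mul, smul_eq_mul, hV]
  ring

theorem lapT_of_apply_eq_mul_apply {n : ℕ} {D : VF → VF → VF} {u V : 𝒞} (e : Fin n → VF)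
    (hV : ∀ X : VF, X V = V * X u) :
    LapT D e V = V * (LapT D e u + ∑ i, e i u * e i u) := by
  simp only [LapT, hessT_of_apply_eq_mul_apply hV, mul_add, sum_add_distrib, ← mul_sum]

/-- for `α = 0, γ = 1` and `V = e^u`, the Ricci tensor of `D^{0,1}` is the
static Ricci tensor `Ric - ∇²V/V + (ΔV/V) g`. -/
theorem ricci_of_static_connection {n : ℕ}
    (g : VF → VF → 𝒞) (hg : IsMetric g)
    (e : Fin n → VF) (he : IsONFrame g e)
    (LC : VF → VF → VF) (hLC : IsAffineConnection LC) (hLCtf : IsTorsionFree LC)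
    (hLCcompat : IsCompatible g LC)
    (u : 𝒞) (gradu : VF) (hgradu : ∀ X : VF, g gradu X = X u)
    (V : 𝒞) (hV : ∀ x : M, V x = Real.exp (u x))
    (hVder : ∀ X : VF, X V = V * X u)
    (D : VF → VF → VF)
    (hD : ∀ X Y, D X Y = LC X Y + g X Y • gradu) :
    ∀ (X Y : VF) (x : M),
      RicciT g e D X Y x
        = RicciT g e LC X Y x - HessT LC V X Y x / V x
          + (LapT LC e V x / V x) * g X Y x := by
  intro X Y x
  have hgrad : ∀ X, g X gradu = X u := fun X => (hg.1 X gradu).trans (hgradu X)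
  have hnorm : ∑ i, e i u * e i u = gradu u := by
    simpa only [hgradu] using he.sum_mul_eq hg gradu gradu
  have hRic : RicciT g e D X Y = RicciT g e LC X Y + g X Y * gradu u - X u * Y u
      + g X Y * LapT LC e u - HessT LC u X Y := by
    rw [ricciT_of_eq_add_metric_smul hg he hLC hLCtf hLCcompat hD, hgrad, hgrad, hgrad,
      divT_eq_lapT_of_grad hLCcompat hgradu,
      hLCcompat.metric_covDeriv_grad_eq_hessT hgradu]
  have hVx : V x ≠ 0 := by rw [hV x]; exact (Real.exp_pos _).ne'
  rw [hRic, hessT_of_apply_eq_mul_apply hVder, lapT_of_apply_eq_mul_apply e hVder, hnorm]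
  simp only [ContMDiffMap.coe_add, ContMDiffMap.coe_sub, ContMDiffMap.coe_mul, Pi.add_apply,
    Pi.sub_apply, Pi.mul_apply]
  field_simp
  ring
end

section
/- For α = 1/(n−1), γ = 0, the Ricci tensor of D^{1/(n−1),0} equals the 1-Bakry–Émery Ricci tensor: Ric^D = Ric − ∇²u + (1/(n−1)) du⊗du. -/
open scoped Manifold
open Finset Function MeasureTheory

variable {EE : Type*} [NormedAddCommGroup EE] [NormedSpace ℝ EE]
  {HM : Type*} [TopologicalSpace HM] {I : ModelWithCorners ℝ EE HM}
  {M : Type*} [TopologicalSpace M] [ChartedSpace HM M] [IsManifold I (⊤ : ℕ∞) M]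

local notation "𝒞" => C^(⊤ : ℕ∞)⟮I, M; ℝ⟯
local notation "VF" => Derivation ℝ C^(⊤ : ℕ∞)⟮I, M; ℝ⟯ C^(⊤ : ℕ∞)⟮I, M; ℝ⟯

section Aux

set_option linter.unusedSectionVars false

/-- Evaluation of a finite sum of derivations. -/
lemma vf_sum_apply {ι : Type*} (s : Finset ι) (f : ι → VF) (w : 𝒞) :
    (∑ i ∈ s, f i) w = ∑ i ∈ s, (f i) w :=
  map_sum (AddMonoidHom.mk' (fun (D : VF) => D w) (fun a b => Derivation.add_apply w)) f s

/-- Key pointwise curvature identity for the Bakry–Émery connection. -/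
lemma rcurv_key (LC : VF → VF → VF) (hLC : IsAffineConnection LC) (hLCtf : IsTorsionFree LC)
    (u : 𝒞) (α : ℝ) (D : VF → VF → VF)
    (hD : ∀ X Y, D X Y = LC X Y + (α • X u) • Y + (α • Y u) • X) (Z X Y : VF) :
    Rcurv D Z X Y = Rcurv LC Z X Y
      + (α • HessT LC u Z Y - (α*α) • (Z u * Y u)) • X
      + ((α*α) • (X u * Y u) - α • HessT LC u X Y) • Z := by
  obtain ⟨h1, h2, h3, h4, h5⟩ := hLC
  have hsc : (LC Z X) u = Z (X u) - X (Z u) + (LC X Z) u := by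
    have := congrArg (fun (V : VF) => V u) (hLCtf Z X)
    simp only [Derivation.sub_apply, Derivation.commutator_apply] at this
    linear_combination this
  rw [Rcurv, Rcurv, HessT, HessT, ← hLCtf Z X]
  simp only [hD, h3, h5, Derivation.add_apply, Derivation.smul_apply, Derivation.map_smul,
    map_sub, Derivation.sub_apply, smul_eq_mul, map_add, hsc]
  match_scalars <;> (first | ring1 | (simp only [Algebra.smul_def, map_pow, map_mul]; ring1))

/-- Additivity-and-linearity in the first slot gives sum expansion. -/
lemma conn_sum_fst {ι : Type*} (s : Finset ι) (B : VF → VF → VF)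
    (h1 : ∀ X Y Z, B (X + Y) Z = B X Z + B Y Z)
    (h2 : ∀ (f : 𝒞) X Y, B (f • X) Y = f • B X Y)
    (f : ι → 𝒞) (v : ι → VF) (Y : VF) :
    B (∑ i ∈ s, f i • v i) Y = ∑ i ∈ s, f i • B (v i) Y := by
  exact (map_sum (AddMonoidHom.mk' (fun (X : VF) => B X Y) (fun a b => h1 a b Y))
    (fun i => f i • v i) s).trans (Finset.sum_congr rfl fun i _ => h2 (f i) (v i) Y)

/-- Frame reproduces derivative evaluation. -/
lemma frame_eval {n : ℕ} (g : VF → VF → 𝒞) (e : Fin n → VF)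
    (he : IsONFrame g e) (X : VF) (w : 𝒞) :
    ∑ i, g X (e i) * (e i) w = X w := by
  conv_rhs => rw [he.2 X]
  rw [vf_sum_apply]
  exact Finset.sum_congr rfl fun i _ => by rw [Derivation.smul_apply, smul_eq_mul]

/-- Frame reproduces the Hessian (tensoriality in the first slot). -/
lemma frame_hess {n : ℕ} (g : VF → VF → 𝒞) (e : Fin n → VF) (he : IsONFrame g e)
    (LC : VF → VF → VF) (hLC : IsAffineConnection LC) (u : 𝒞) (X Y : VF) :
    ∑ i, g X (e i) * HessT LC u (e i) Y = HessT LC u X Y := by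
  obtain ⟨h1, h2, h3, h4, h5⟩ := hLC
  have hLCX : (LC X Y) u = ∑ i, g X (e i) * (LC (e i) Y) u := by
    conv_lhs => rw [he.2 X]
    rw [conn_sum_fst _ LC h1 h2, vf_sum_apply]
    exact Finset.sum_congr rfl fun i _ => by rw [Derivation.smul_apply, smul_eq_mul]
  simp only [HessT, mul_sub]
  rw [Finset.sum_sub_distrib, frame_eval g e he X (Y u), ← hLCX]

end Aux

/-- for `α = 1/(n-1), γ = 0`, the Ricci tensor of `D^{1/(n-1),0}` is the
1-Bakry–Émery Ricci tensor `Ric - ∇²u + (1/(n-1)) du ⊗ du`. -/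
theorem ricci_of_bakry_emery_connection {n : ℕ} (hn : 2 ≤ n)
    (g : VF → VF → 𝒞) (hg : IsMetric g)
    (e : Fin n → VF) (he : IsONFrame g e)
    (LC : VF → VF → VF) (hLC : IsAffineConnection LC) (hLCtf : IsTorsionFree LC)
    (hLCcompat : IsCompatible g LC)
    (u : 𝒞)
    (α : ℝ) (hα : α = 1 / ((n : ℝ) - 1))
    (D : VF → VF → VF)
    (hD : ∀ X Y, D X Y = LC X Y + (α • X u) • Y + (α • Y u) • X) :
    ∀ X Y : VF,
      RicciT g e D X Y
        = RicciT g e LC X Y - HessT LC u X Y + (1 / ((n : ℝ) - 1)) • (X u * Y u) := by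
  intro X Y
  obtain ⟨hgs, hga, hgm⟩ := hg
  have hne : (n : ℝ) - 1 ≠ 0 := by
    have : (2:ℝ) ≤ (n:ℝ) := by exact_mod_cast hn
    intro h; nlinarith
  -- expand each summand
  have hterm : ∀ i, g (Rcurv D (e i) X Y) (e i)
      = g (Rcurv LC (e i) X Y) (e i)
        + (α • (g X (e i) * HessT LC u (e i) Y) - (α*α) • (g X (e i) * ((e i) u * Y u)))
        + ((α*α) • (X u * Y u) - α • HessT LC u X Y) * g (e i) (e i) := by
    intro i
    rw [rcurv_key LC hLC hLCtf u α D hD (e i) X Y, hga, hga, hgm, hgm]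
    simp only [Algebra.smul_def, map_mul]
    ring
  rw [RicciT]
  simp only [hterm]
  rw [Finset.sum_add_distrib, Finset.sum_add_distrib, ← RicciT]
  have hsum1 : ∑ i, (α • (g X (e i) * HessT LC u (e i) Y)
      - (α*α) • (g X (e i) * ((e i) u * Y u)))
      = α • HessT LC u X Y - (α*α) • (X u * Y u) := by
    rw [Finset.sum_sub_distrib, ← Finset.smul_sum, ← Finset.smul_sum,
      frame_hess g e he LC hLC u X Y]
    congr 1
    have : ∑ i, g X (e i) * ((e i) u * Y u) = (∑ i, g X (e i) * (e i) u) * Y u := by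
      rw [Finset.sum_mul]; exact Finset.sum_congr rfl fun i _ => by ring
    rw [this, frame_eval g e he X u]
  have hsum2 : ∑ i, ((α*α) • (X u * Y u) - α • HessT LC u X Y) * g (e i) (e i)
      = (n : ℝ) • ((α*α) • (X u * Y u) - α • HessT LC u X Y) := by
    have : ∀ i : Fin n, ((α*α) • (X u * Y u) - α • HessT LC u X Y) * g (e i) (e i)
        = (α*α) • (X u * Y u) - α • HessT LC u X Y := by
      intro i; rw [he.1 i i, if_pos rfl, mul_one]
    simp only [this, Finset.sum_const, card_univ, Fintype.card_fin]
    rw [← Nat.cast_smul_eq_nsmul ℝ]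
  rw [hsum1, hsum2]
  subst hα
  match_scalars <;> (first | ring1 | (field_simp; first | ring1 | exact Or.inl (by ring)))
end
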